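/- arXiv:math/0603517 — 5 statements merged into one kernel-verified Lean document; each statement's English description precedes it below -/
import Mathlib

section
/- The mirror-symmetry generator matrices satisfy the following commutation relations: A_i A_j = A_j A_i and B_i B_j = B_j B_i for all i, j; A_i B_j = B_j A_i whenever i < j; and A_i B_j = −B_j A_i whenever i ≥ j. -/
open Matrix

/-- The mirror-reflection generator `A_i` of size `2^m`. -/
def mirrorA (m i : ℕ) : Matrix (Fin (2 ^ m)) (Fin (2 ^ m)) ℝ :=
  Matrix.of fun k l =>
    if (k : ℕ) / 2 ^ i = (l : ℕ) / 2 ^ i ∧ (k : ℕ) % 2 ^ i + (l : ℕ) % 2 ^ i = 2 ^ i - 1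
    then 1 else 0

/-- The mirror-inversion generator `B_i` of size `2^m`. -/
def mirrorB (m i : ℕ) : Matrix (Fin (2 ^ m)) (Fin (2 ^ m)) ℝ :=
  Matrix.diagonal fun k => (-1 : ℝ) ^ ((k : ℕ) / 2 ^ (i - 1))

lemma msk_div (i k : ℕ) : (k ^^^ (2 ^ i - 1)) / 2 ^ i = k / 2 ^ i := by
  rw [← Nat.shiftRight_eq_div_pow, ← Nat.shiftRight_eq_div_pow]
  apply Nat.eq_of_testBit_eq
  intro t
  simp [Nat.testBit_shiftRight, Nat.testBit_xor, show ¬(i + t < i) by omega]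

lemma msk_xor_of_lt {i r : ℕ} (h : r < 2 ^ i) : r ^^^ (2 ^ i - 1) = 2 ^ i - 1 - r := by
  induction i generalizing r with
  | zero => interval_cases r; rfl
  | succ n ih =>
    have h2 : 2 ^ (n + 1) = 2 * 2 ^ n := by ring
    have hd : (r ^^^ (2 ^ (n+1) - 1)) / 2 = 2 ^ n - 1 - r / 2 := by
      rw [Nat.xor_div_two, show (2 ^ (n+1) - 1) / 2 = 2 ^ n - 1 by omega]
      exact ih (by omega)
    have hm : (r ^^^ (2 ^ (n+1) - 1)) % 2 = 1 - r % 2 := by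
      have := Nat.testBit_xor r (2 ^ (n+1) - 1) 0
      rw [Nat.testBit_two_pow_sub_one] at this
      simp only [Nat.testBit_eq_decide_div_mod_eq, Nat.pow_zero, Nat.div_one,
        show (0 < n + 1) = True by simp, decide_true] at this
      rcases Nat.mod_two_eq_zero_or_one r with h' | h' <;>
        rcases Nat.mod_two_eq_zero_or_one ((r ^^^ (2 ^ (n+1) - 1))) with h'' | h'' <;>
          simp [h', h''] at this ⊢
    omega

lemma msk_mod (i k : ℕ) : (k ^^^ (2 ^ i - 1)) % 2 ^ i = 2 ^ i - 1 - k % 2 ^ i := by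
  rw [← Nat.and_two_pow_sub_one_eq_mod, Nat.and_xor_distrib_right, Nat.and_self,
    Nat.and_two_pow_sub_one_eq_mod]
  exact msk_xor_of_lt (Nat.mod_lt _ (Nat.pow_pos (by norm_num)))

lemma cond_iff (i k l : ℕ) :
    (k / 2 ^ i = l / 2 ^ i ∧ k % 2 ^ i + l % 2 ^ i = 2 ^ i - 1) ↔ l = k ^^^ (2 ^ i - 1) := by
  have hk : k % 2 ^ i < 2 ^ i := Nat.mod_lt _ (Nat.pow_pos (by norm_num))
  have hd := msk_div i k
  have hm := msk_mod i k
  constructor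
  · rintro ⟨h1, h2⟩
    have hmod : l % 2 ^ i = (k ^^^ (2 ^ i - 1)) % 2 ^ i := by omega
    have hdiv : l / 2 ^ i = (k ^^^ (2 ^ i - 1)) / 2 ^ i := h1.symm.trans hd.symm
    calc l = 2 ^ i * (l / 2 ^ i) + l % 2 ^ i := (Nat.div_add_mod l _).symm
      _ = 2 ^ i * ((k ^^^ (2 ^ i - 1)) / 2 ^ i) + (k ^^^ (2 ^ i - 1)) % 2 ^ i := by
          rw [hdiv, hmod]
      _ = k ^^^ (2 ^ i - 1) := Nat.div_add_mod _ _
  · rintro rfl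
    exact ⟨hd.symm, by omega⟩

lemma msk_lt {m i k : ℕ} (hi : i ≤ m) (hk : k < 2 ^ m) : k ^^^ (2 ^ i - 1) < 2 ^ m := by
  refine Nat.xor_lt_two_pow hk ?_
  have : (2:ℕ) ^ i ≤ 2 ^ m := Nat.pow_le_pow_right (by norm_num) hi
  omega

lemma msk_parity (i t k : ℕ) :
    (k ^^^ (2 ^ i - 1)) / 2 ^ t % 2 = if t < i then 1 - k / 2 ^ t % 2 else k / 2 ^ t % 2 := by
  have := Nat.testBit_xor k (2 ^ i - 1) t
  rw [Nat.testBit_two_pow_sub_one] at this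
  simp only [Nat.testBit_eq_decide_div_mod_eq] at this
  have h1 := Nat.mod_two_eq_zero_or_one ((k ^^^ (2 ^ i - 1)) / 2 ^ t)
  have h2 := Nat.mod_two_eq_zero_or_one (k / 2 ^ t)
  by_cases h : t < i <;>
    rcases h1 with h1 | h1 <;> rcases h2 with h2 | h2 <;>
      simp [h, h1, h2] at this ⊢ <;> omega

lemma neg_one_pow_congr' {a b : ℕ} (h : a % 2 = b % 2) : (-1 : ℝ) ^ a = (-1) ^ b := by
  conv_lhs => rw [← Nat.div_add_mod a 2]
  conv_rhs => rw [← Nat.div_add_mod b 2]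
  rw [h]
  simp [pow_add, pow_mul]

lemma neg_one_pow_anticongr {a b : ℕ} (h : a % 2 ≠ b % 2) : (-1 : ℝ) ^ a = -(-1) ^ b := by
  conv_lhs => rw [← Nat.div_add_mod a 2]
  conv_rhs => rw [← Nat.div_add_mod b 2]
  have h1 := Nat.mod_two_eq_zero_or_one a
  have h2 := Nat.mod_two_eq_zero_or_one b
  rcases h1 with h1 | h1 <;> rcases h2 with h2 | h2 <;>
    simp [h1, h2, pow_add, pow_mul] at h ⊢

lemma mulA_entry {m : ℕ} (i j : ℕ) (hi : i ≤ m) (k l : Fin (2 ^ m)) :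
    (mirrorA m i * mirrorA m j) k l =
      if (l : ℕ) = ((k : ℕ) ^^^ (2 ^ i - 1)) ^^^ (2 ^ j - 1) then 1 else 0 := by
  classical
  set x : Fin (2 ^ m) := ⟨(k : ℕ) ^^^ (2 ^ i - 1), msk_lt hi k.isLt⟩ with hx
  rw [Matrix.mul_apply]
  rw [Finset.sum_eq_single x]
  · simp only [mirrorA, Matrix.of_apply]
    rw [if_pos ((cond_iff i k x).mpr rfl), one_mul]
    simp only [cond_iff j (x : ℕ) (l : ℕ)]
    rfl
  · intro b _ hb
    simp only [mirrorA, Matrix.of_apply]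
    rw [if_neg, zero_mul]
    intro hc
    exact hb (Fin.ext ((cond_iff i k b).mp hc))
  · intro h
    exact absurd (Finset.mem_univ x) h

theorem mirror_generators_commutation (m i j : ℕ)
    (hi1 : 1 ≤ i) (hi2 : i ≤ m) (hj1 : 1 ≤ j) (hj2 : j ≤ m) :
    mirrorA m i * mirrorA m j = mirrorA m j * mirrorA m i ∧
    mirrorB m i * mirrorB m j = mirrorB m j * mirrorB m i ∧
    (i < j → mirrorA m i * mirrorB m j = mirrorB m j * mirrorA m i) ∧
    (j ≤ i → mirrorA m i * mirrorB m j = -(mirrorB m j * mirrorA m i)) := by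
  refine ⟨?_, ?_, ?_, ?_⟩
  · ext k l
    rw [mulA_entry i j hi2, mulA_entry j i hj2]
    rw [Nat.xor_assoc, Nat.xor_comm (2 ^ i - 1), ← Nat.xor_assoc]
  · unfold mirrorB
    rw [Matrix.diagonal_mul_diagonal, Matrix.diagonal_mul_diagonal]
    ext k l
    by_cases h : k = l <;> simp [Matrix.diagonal_apply, h, mul_comm]
  · intro hij
    ext k l
    simp only [mirrorA, mirrorB, Matrix.mul_diagonal, Matrix.diagonal_mul, Matrix.of_apply]
    by_cases hc : (k : ℕ) / 2 ^ i = (l : ℕ) / 2 ^ i ∧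
        (k : ℕ) % 2 ^ i + (l : ℕ) % 2 ^ i = 2 ^ i - 1
    · rw [if_pos hc, one_mul, mul_one]
      rw [(cond_iff i k l).mp hc]
      refine neg_one_pow_congr' ?_
      rw [msk_parity i (j - 1) (k : ℕ), if_neg (by omega)]
    · rw [if_neg hc, zero_mul, mul_zero]
  · intro hij
    ext k l
    simp only [mirrorA, mirrorB, Matrix.neg_apply, Matrix.mul_diagonal, Matrix.diagonal_mul,
      Matrix.of_apply]
    by_cases hc : (k : ℕ) / 2 ^ i = (l : ℕ) / 2 ^ i ∧
        (k : ℕ) % 2 ^ i + (l : ℕ) % 2 ^ i = 2 ^ i - 1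
    · rw [if_pos hc, one_mul, mul_one]
      rw [(cond_iff i k l).mp hc]
      refine neg_one_pow_anticongr ?_
      rw [msk_parity i (j - 1) (k : ℕ), if_pos (by omega)]
      have := Nat.mod_two_eq_zero_or_one ((k : ℕ) / 2 ^ (j - 1))
      omega
    · rw [if_neg hc, zero_mul, mul_zero, neg_zero]
end

section
/- For a, b : Fin m → ZMod 2, let A^a be the product of the matrices A_i over those indices i with a_i = 1 and let B^b be the product of the matrices B_j over those indices j with b_j = 1 (each product is well defined since the A_i pairwise commute and the B_j pairwise commute), and let δ(a,b) be the number of pairs (i, j) with a_i = 1, b_j = 1 and j ≤ i. Then B^b A^a = (−1)^{δ(a,b)} A^a B^b, and consequently (A^a B^b)² = (−1)^{δ(a,b)} · 1. -/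
open Matrix

/-- The product `A^a` of the generators `A_{i+1}` over those `i : Fin m` with `a i = 1`
(taken in the natural order; since the `A_i` pairwise commute the order is immaterial). -/
def mirrorAProd (m : ℕ) (a : Fin m → ZMod 2) : Matrix (Fin (2 ^ m)) (Fin (2 ^ m)) ℝ :=
  ((List.finRange m).map fun i => if a i = 1 then mirrorA m ((i : ℕ) + 1) else 1).prod

/-- The product `B^b` of the generators `B_{j+1}` over those `j : Fin m` with `b j = 1`
(taken in the natural order; since the `B_j` pairwise commute the order is immaterial). -/
def mirrorBProd (m : ℕ) (b : Fin m → ZMod 2) : Matrix (Fin (2 ^ m)) (Fin (2 ^ m)) ℝ :=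
  ((List.finRange m).map fun j => if b j = 1 then mirrorB m ((j : ℕ) + 1) else 1).prod

/-- `δ(a,b)`: the number of pairs `(i, j)` with `a i = 1`, `b j = 1` and `j ≤ i`. -/
def mirrorDelta (m : ℕ) (a b : Fin m → ZMod 2) : ℕ :=
  (Finset.univ.filter fun p : Fin m × Fin m => a p.1 = 1 ∧ b p.2 = 1 ∧ p.2 ≤ p.1).card

/-!
`A_i` is the permutation matrix of `k ↦ k xor (2^i - 1)`, which flips the lowest `i` binary digits
of `k`, and `B_j` is diagonal with entries `±1` given by the `(j-1)`-th binary digit of `k`. So the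
`A_i` are commuting involutions, and so are the `B_j`, while `B_j A_i = ± A_i B_j` with the sign
`-1` exactly when `j ≤ i`, i.e. when flipping the lowest `i` digits changes digit `j - 1`. Pushing
every factor of `B^b` through every factor of `A^a` collects the sign `(-1)^δ(a,b)`, and then
`(A^a B^b)^2 = (-1)^δ(a,b) (A^a)^2 (B^b)^2 = (-1)^δ(a,b)`.
-/

section SkewCommute

variable {ι R M : Type*} [CommSemiring R] [Semiring M] [Algebra R M]

theorem mul_list_prod_map_of_skew {x : M} {f : ι → M} {c : ι → R}
    (h : ∀ i, x * f i = c i • (f i * x)) (s : List ι) :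
    x * (s.map f).prod = (s.map c).prod • ((s.map f).prod * x) := by
  induction s with
  | nil => simp
  | cons i s ih =>
    simp only [List.map_cons, List.prod_cons]
    rw [← mul_assoc, h, smul_mul_assoc, mul_assoc, ih, mul_smul_comm, smul_smul, mul_assoc]

theorem list_prod_map_mul_list_prod_map_of_skew {f g : ι → M} {c : ι → ι → R}
    (h : ∀ i j, g j * f i = c i j • (f i * g j)) (s t : List ι) :
    (t.map g).prod * (s.map f).prod =
      (t.map fun j => (s.map fun i => c i j).prod).prod • ((s.map f).prod * (t.map g).prod) := by
  induction t with
  | nil => simp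
  | cons j t ih =>
    simp only [List.map_cons, List.prod_cons]
    rw [mul_assoc, ih, mul_smul_comm, ← mul_assoc, mul_list_prod_map_of_skew (h · j),
      smul_mul_assoc, smul_smul, mul_assoc, mul_comm]

theorem ite_mul_ite_of_skew {x y : M} {c : R} (h : y * x = c • (x * y)) (p q : Prop)
    [Decidable p] [Decidable q] :
    (if q then y else 1) * (if p then x else 1) =
      (if p ∧ q then c else 1) • ((if p then x else 1) * (if q then y else 1)) := by
  by_cases hp : p <;> by_cases hq : q <;> simp [hp, hq, h]

end SkewCommute

theorem list_prod_map_mul_self_eq_one {ι M : Type*} [Monoid M] {f : ι → M}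
    (hcomm : ∀ i j, Commute (f i) (f j)) (hsq : ∀ i, f i * f i = 1) (s : List ι) :
    (s.map f).prod * (s.map f).prod = 1 := by
  induction s with
  | nil => simp
  | cons i s ih =>
    have hi : Commute (f i) (s.map f).prod :=
      Commute.list_prod_right _ _ (by simpa using fun j _ => hcomm i j)
    simp only [List.map_cons, List.prod_cons]
    rw [mul_assoc, ← mul_assoc (s.map f).prod, ← hi.eq, mul_assoc, ih, mul_one, hsq]

theorem diagonal_mul_permMatrix_of_skew {n R : Type*} [DecidableEq n] [Fintype n] [CommSemiring R]
    {d : n → R} {σ : Equiv.Perm n} {c : R} (h : ∀ k, d k = c * d (σ k)) :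
    diagonal d * σ.permMatrix R = c • (σ.permMatrix R * diagonal d) := by
  ext k l
  rw [diagonal_mul, Matrix.smul_apply, mul_diagonal, Equiv.Perm.permMatrix,
    PEquiv.toMatrix_toPEquiv_apply]
  by_cases hl : σ k = l
  · subst hl; simp [h k]
  · simp [Ne.symm hl]

theorem Nat.xor_two_pow_sub_one_of_lt {x n : ℕ} (h : x < 2 ^ n) :
    x ^^^ (2 ^ n - 1) = 2 ^ n - 1 - x := by
  have := BitVec.toNat_not (x := BitVec.ofNatLT x h)
  rw [BitVec.not_def, BitVec.toNat_xor, BitVec.toNat_allOnes, BitVec.toNat_ofNatLT] at this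
  rwa [Nat.xor_comm] at this

theorem Nat.eq_xor_two_pow_sub_one_iff {i k l : ℕ} :
    l = k ^^^ (2 ^ i - 1) ↔ k / 2 ^ i = l / 2 ^ i ∧ k % 2 ^ i + l % 2 ^ i = 2 ^ i - 1 := by
  have hpos := Nat.two_pow_pos i
  have hk := Nat.mod_lt k hpos
  have hmask : (2 ^ i - 1) / 2 ^ i = 0 := Nat.div_eq_of_lt (by omega)
  have hdiv : (k ^^^ (2 ^ i - 1)) / 2 ^ i = k / 2 ^ i := by
    rw [Nat.xor_div_two_pow, hmask, Nat.xor_zero]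
  have hmod : (k ^^^ (2 ^ i - 1)) % 2 ^ i = 2 ^ i - 1 - k % 2 ^ i := by
    rw [Nat.xor_mod_two_pow, Nat.mod_eq_of_lt (by omega : 2 ^ i - 1 < 2 ^ i),
      Nat.xor_two_pow_sub_one_of_lt hk]
  constructor
  · rintro rfl
    omega
  · rintro ⟨hd, hm⟩
    rw [← Nat.div_add_mod l (2 ^ i), ← Nat.div_add_mod (k ^^^ (2 ^ i - 1)) (2 ^ i), hdiv, hmod,
      hd]
    omega

theorem neg_one_pow_div_two_pow {R : Type*} [Ring R] (k j : ℕ) :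
    (-1 : R) ^ (k / 2 ^ j) = if k.testBit j then -1 else 1 := by
  rw [neg_one_pow_eq_pow_mod_two, Nat.testBit_eq_decide_div_mod_eq]
  rcases Nat.mod_two_eq_zero_or_one (k / 2 ^ j) with h | h <;> simp [h]

def xorPerm {m : ℕ} (c : Fin (2 ^ m)) : Equiv.Perm (Fin (2 ^ m)) :=
  Function.Involutive.toPerm (· ^^^ c) fun k => Fin.ext (by simp)

@[simp]
theorem xorPerm_apply {m : ℕ} (c k : Fin (2 ^ m)) : xorPerm c k = k ^^^ c := rfl

theorem xorPerm_mul_self {m : ℕ} (c : Fin (2 ^ m)) : xorPerm c * xorPerm c = 1 :=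
  Equiv.ext fun k => Fin.ext (by simp)

theorem xorPerm_commute {m : ℕ} (c d : Fin (2 ^ m)) : Commute (xorPerm c) (xorPerm d) :=
  Equiv.ext fun k => Fin.ext (by simp [Nat.xor_right_comm])

theorem Nat.two_pow_sub_one_lt_two_pow {i m : ℕ} (hi : i ≤ m) : 2 ^ i - 1 < 2 ^ m :=
  lt_of_lt_of_le (Nat.sub_one_lt (Nat.two_pow_pos i).ne') (Nat.pow_le_pow_right two_pos hi)

theorem mirrorA_eq_permMatrix {m i : ℕ} (hi : i ≤ m) :
    mirrorA m i = (xorPerm ⟨2 ^ i - 1, Nat.two_pow_sub_one_lt_two_pow hi⟩).permMatrix ℝ := by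
  ext k l
  rw [Equiv.Perm.permMatrix, PEquiv.toMatrix_toPEquiv_apply, mirrorA, of_apply, Pi.single_apply]
  refine if_congr ?_ rfl rfl
  rw [← Nat.eq_xor_two_pow_sub_one_iff, Fin.ext_iff, xorPerm_apply, Fin.xor_val_of_two_pow]

theorem mirrorB_succ {m j : ℕ} :
    mirrorB m (j + 1) = diagonal fun k : Fin (2 ^ m) => if (k : ℕ).testBit j then -1 else 1 := by
  simp only [mirrorB, Nat.add_sub_cancel, neg_one_pow_div_two_pow]

theorem mirrorB_succ_mul_mirrorA {m i : ℕ} (hi : i ≤ m) (j : ℕ) :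
    mirrorB m (j + 1) * mirrorA m i =
      (if j < i then -1 else 1 : ℝ) • (mirrorA m i * mirrorB m (j + 1)) := by
  rw [mirrorB_succ, mirrorA_eq_permMatrix hi]
  refine diagonal_mul_permMatrix_of_skew fun k => ?_
  simp only [xorPerm_apply, Fin.xor_val_of_two_pow, Nat.testBit_xor,
    Nat.testBit_two_pow_sub_one]
  by_cases hk : (k : ℕ).testBit j <;> by_cases hj : j < i <;> simp [hk, hj]

theorem mirrorA_mul_self {m i : ℕ} (hi : i ≤ m) : mirrorA m i * mirrorA m i = 1 := by
  rw [mirrorA_eq_permMatrix hi, ← permMatrix_mul, xorPerm_mul_self, permMatrix_one]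

theorem mirrorA_commute {m i i' : ℕ} (hi : i ≤ m) (hi' : i' ≤ m) :
    Commute (mirrorA m i) (mirrorA m i') := by
  rw [mirrorA_eq_permMatrix hi, mirrorA_eq_permMatrix hi', Commute, SemiconjBy,
    ← permMatrix_mul, ← permMatrix_mul, (xorPerm_commute _ _).eq]

theorem mirrorB_mul_self (m j : ℕ) : mirrorB m j * mirrorB m j = 1 := by
  rw [mirrorB, diagonal_mul_diagonal, ← diagonal_one]
  simp only [← mul_pow, neg_one_mul, neg_neg, one_pow]

theorem mirrorB_commute (m j j' : ℕ) : Commute (mirrorB m j) (mirrorB m j') :=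
  commute_diagonal _ _

section Products

variable {m : ℕ} (a b : Fin m → ZMod 2)

def mirrorAFactor (i : Fin m) : Matrix (Fin (2 ^ m)) (Fin (2 ^ m)) ℝ :=
  if a i = 1 then mirrorA m (i + 1) else 1

def mirrorBFactor (j : Fin m) : Matrix (Fin (2 ^ m)) (Fin (2 ^ m)) ℝ :=
  if b j = 1 then mirrorB m (j + 1) else 1

theorem mirrorAProd_eq : mirrorAProd m a = ((List.finRange m).map (mirrorAFactor a)).prod := rfl

theorem mirrorBProd_eq : mirrorBProd m b = ((List.finRange m).map (mirrorBFactor b)).prod := rfl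

theorem mirrorAProd_mul_self : mirrorAProd m a * mirrorAProd m a = 1 := by
  refine list_prod_map_mul_self_eq_one (fun i i' => ?_) (fun i => ?_) _
  · split_ifs
    exacts [mirrorA_commute i.isLt i'.isLt, Commute.one_right _, Commute.one_left _,
      Commute.one_left _]
  · split_ifs
    exacts [mirrorA_mul_self i.isLt, one_mul 1]

theorem mirrorBProd_mul_self : mirrorBProd m b * mirrorBProd m b = 1 := by
  refine list_prod_map_mul_self_eq_one (fun j j' => ?_) (fun j => ?_) _
  · split_ifs
    exacts [mirrorB_commute _ _ _, Commute.one_right _, Commute.one_left _, Commute.one_left _]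
  · split_ifs
    exacts [mirrorB_mul_self _ _, one_mul 1]

theorem mirrorBFactor_mul_mirrorAFactor (i j : Fin m) :
    mirrorBFactor b j * mirrorAFactor a i =
      (if a i = 1 ∧ b j = 1 ∧ j ≤ i then -1 else 1 : ℝ) •
        (mirrorAFactor a i * mirrorBFactor b j) := by
  rw [mirrorBFactor, mirrorAFactor, ite_mul_ite_of_skew (mirrorB_succ_mul_mirrorA i.isLt j)]
  simp only [← ite_and, and_assoc, Nat.lt_add_one_iff, Fin.le_def]

theorem neg_one_pow_mirrorDelta {R : Type*} [CommMonoid R] [HasDistribNeg R] :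
    (-1 : R) ^ mirrorDelta m a b =
      ∏ j, ∏ i, if a i = 1 ∧ b j = 1 ∧ j ≤ i then -1 else 1 := by
  rw [← Fintype.prod_prod_type_right
      (f := fun p => if a p.1 = 1 ∧ b p.2 = 1 ∧ p.2 ≤ p.1 then -1 else 1),
    ← Finset.prod_filter, Finset.prod_const, mirrorDelta]

theorem mirrorBProd_mul_mirrorAProd :
    mirrorBProd m b * mirrorAProd m a =
      ((-1 : ℝ) ^ mirrorDelta m a b) • (mirrorAProd m a * mirrorBProd m b) := by
  rw [mirrorAProd_eq, mirrorBProd_eq,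
    list_prod_map_mul_list_prod_map_of_skew (mirrorBFactor_mul_mirrorAFactor a b),
    neg_one_pow_mirrorDelta]
  simp only [Fin.prod_univ_def]

end Products

theorem mirror_prod_commutation (m : ℕ) (a b : Fin m → ZMod 2) :
    mirrorBProd m b * mirrorAProd m a =
      ((-1 : ℝ) ^ mirrorDelta m a b) • (mirrorAProd m a * mirrorBProd m b) ∧
    (mirrorAProd m a * mirrorBProd m b) * (mirrorAProd m a * mirrorBProd m b) =
      ((-1 : ℝ) ^ mirrorDelta m a b) • (1 : Matrix (Fin (2 ^ m)) (Fin (2 ^ m)) ℝ) := by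
  refine ⟨mirrorBProd_mul_mirrorAProd a b, ?_⟩
  calc mirrorAProd m a * mirrorBProd m b * (mirrorAProd m a * mirrorBProd m b)
      = mirrorAProd m a * (mirrorBProd m b * mirrorAProd m a) * mirrorBProd m b := by
        simp only [mul_assoc]
    _ = ((-1 : ℝ) ^ mirrorDelta m a b) •
          ((mirrorAProd m a * mirrorAProd m a) * (mirrorBProd m b * mirrorBProd m b)) := by
        rw [mirrorBProd_mul_mirrorAProd, mul_smul_comm, smul_mul_assoc]
        simp only [mul_assoc]
    _ = ((-1 : ℝ) ^ mirrorDelta m a b) • 1 := by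
        rw [mirrorAProd_mul_self, mirrorBProd_mul_self, one_mul]
end

section
/- Let m ≥ 1. The number of pairs (a, b) with a, b : Fin m → ZMod 2 and α(a, b) = 1 equals 2^{m−1} · (2^m − 1). -/
/-- The function `α(a,b) = Σ_i a_i · (Σ_{j ≤ i} b_j)` on `(Fin m → ZMod 2) × (Fin m → ZMod 2)`. -/
def alpha {m : ℕ} (a b : Fin m → ZMod 2) : ZMod 2 :=
  ∑ i : Fin m, a i * ∑ j ∈ Finset.Iic i, b j

lemma zmod2_ne_zero {x : ZMod 2} (h : x ≠ 0) : x = 1 := by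
  revert h; revert x; decide

lemma linform_count {m : ℕ} (hm : 1 ≤ m) (c : Fin m → ZMod 2) (hc : c ≠ 0) :
    (Finset.univ.filter fun a : Fin m → ZMod 2 => ∑ i, a i * c i = 1).card = 2 ^ (m - 1) := by
  obtain ⟨i0, hi0⟩ : ∃ i0, c i0 ≠ 0 := by
    by_contra h; push_neg at h; exact hc (funext fun i => h i)
  have hci0 : c i0 = 1 := zmod2_ne_zero hi0
  set f : (Fin m → ZMod 2) → ZMod 2 := fun a => ∑ i, a i * c i with hf
  have hadd : ∀ a a', f (a + a') = f a + f a' := by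
    intro a a'
    simp [hf, add_mul, Finset.sum_add_distrib]
  have hsingle : f (Pi.single i0 1) = 1 := by
    simp [hf, Pi.single_apply, hci0]
  set e : Fin m → ZMod 2 := Pi.single i0 1 with he
  have hflip : ∀ a, f (a + e) = f a + 1 := fun a => by rw [hadd, hsingle]
  have he2 : e + e = 0 := by
    funext i
    simp only [he, Pi.add_apply, Pi.single_apply, Pi.zero_apply]
    split <;> decide
  have hee : ∀ a : Fin m → ZMod 2, a + e + e = a := by
    intro a; rw [add_assoc, he2, add_zero]
  have hcard : (Finset.univ.filter fun a : Fin m → ZMod 2 => f a = 1).card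
      = (Finset.univ.filter fun a : Fin m → ZMod 2 => f a = 0).card := by
    apply Finset.card_nbij' (i := fun a => a + e) (j := fun a => a + e)
    · intro a ha
      simp only [Finset.mem_coe, Finset.mem_filter, Finset.mem_univ, true_and] at ha ⊢
      rw [hflip, ha]; decide
    · intro a ha
      simp only [Finset.mem_coe, Finset.mem_filter, Finset.mem_univ, true_and] at ha ⊢
      rw [hflip, ha]; decide
    · intro a _; exact hee a
    · intro a _; exact hee a
  have htot : (Finset.univ.filter fun a : Fin m → ZMod 2 => f a = 1).card
      + (Finset.univ.filter fun a : Fin m → ZMod 2 => f a = 0).card = 2 ^ m := by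
    have h1 : (Finset.univ.filter fun a : Fin m → ZMod 2 => ¬ (f a = 1))
        = Finset.univ.filter fun a : Fin m → ZMod 2 => f a = 0 := by
      apply Finset.filter_congr
      intro a _
      constructor
      · intro h; exact by_contra fun h0 => h (zmod2_ne_zero h0)
      · intro h h1; rw [h] at h1; exact absurd h1 (by decide)
    rw [← h1, Finset.card_filter_add_card_filter_not]
    simp [Finset.card_univ, ZMod.card]
  have hpow : 2 ^ m = 2 * 2 ^ (m - 1) := by
    rw [← pow_succ']
    congr 1
    omega
  have h2 : 2 * (Finset.univ.filter fun a : Fin m → ZMod 2 => f a = 1).card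
      = 2 * 2 ^ (m - 1) := by
    rw [two_mul]
    nth_rewrite 2 [hcard]
    rw [htot, hpow]
  exact Nat.eq_of_mul_eq_mul_left (by norm_num) h2

lemma partial_zero {m : ℕ} (b : Fin m → ZMod 2)
    (h : ∀ i : Fin m, ∑ j ∈ Finset.Iic i, b j = 0) : b = 0 := by
  have H : ∀ n : ℕ, ∀ i : Fin m, i.val = n → b i = 0 := by
    intro n
    induction n using Nat.strong_induction_on with
    | _ n ih =>
      intro i hi
      have hs := h i
      rw [← Finset.Iio_insert, Finset.sum_insert (by simp)] at hs
      have hz : ∑ j ∈ Finset.Iio i, b j = 0 := by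
        apply Finset.sum_eq_zero
        intro j hj
        have hji : j < i := Finset.mem_Iio.mp hj
        have hj' : (j : ℕ) < n := by rw [← hi]; exact hji
        exact ih (j : ℕ) hj' j rfl
      rw [hz, add_zero] at hs
      exact hs
  funext i
  simpa using H i.val i rfl

theorem alpha_total_count (m : ℕ) (hm : 1 ≤ m) :
    (Finset.univ.filter fun p : (Fin m → ZMod 2) × (Fin m → ZMod 2) =>
      alpha p.1 p.2 = 1).card = 2 ^ (m - 1) * (2 ^ m - 1) := by
  classical
  have key : ∀ b : Fin m → ZMod 2,
      (Finset.univ.filter fun a : Fin m → ZMod 2 => alpha a b = 1).card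
      = if b = 0 then 0 else 2 ^ (m - 1) := by
    intro b
    by_cases hb : b = 0
    · subst hb
      rw [if_pos rfl, Finset.card_eq_zero, Finset.filter_eq_empty_iff]
      intro a _
      simp [alpha]
    · rw [if_neg hb]
      have hc : (fun i : Fin m => ∑ j ∈ Finset.Iic i, b j) ≠ 0 := by
        intro h
        exact hb (partial_zero b (fun i => congrFun h i))
      exact linform_count hm _ hc
  rw [Finset.card_filter]
  rw [Fintype.sum_prod_type]
  rw [Finset.sum_comm]
  have : ∀ b : Fin m → ZMod 2,
      (∑ a : Fin m → ZMod 2, if alpha a b = 1 then 1 else 0)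
      = if b = 0 then 0 else 2 ^ (m - 1) := by
    intro b
    rw [← Finset.card_filter]
    exact key b
  rw [Finset.sum_congr rfl fun b _ => this b]
  rw [Finset.sum_ite, Finset.sum_const, Finset.sum_const]
  have hcard0 : (Finset.univ.filter fun b : Fin m → ZMod 2 => ¬ b = 0).card = 2 ^ m - 1 := by
    have h1 : (Finset.univ.filter fun b : Fin m → ZMod 2 => b = 0).card = 1 := by
      simp [Finset.filter_eq']
    have h2 := Finset.card_filter_add_card_filter_not
      (s := (Finset.univ : Finset (Fin m → ZMod 2))) (p := fun b => b = 0)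
    have h3 : (Finset.univ : Finset (Fin m → ZMod 2)).card = 2 ^ m := by
      simp [Finset.card_univ, ZMod.card]
    omega
  rw [hcard0]
  simp [mul_comm]
end

section
/- For every m : ℕ there exists a finite set S of pairs (a, b) with a, b : Fin m → ZMod 2 such that S has cardinality p(m), α(a, b) = 1 for every (a, b) ∈ S, and α(a + a', b + b') = 1 for every two distinct elements (a, b), (a', b') of S. -/
/-- The Radon–Hurwitz number `p m = 8 * d + 2 ^ c - 1`, where `m = 4 * d + c` and `c = m % 4`. -/
def radonHurwitz (m : ℕ) : ℕ := 8 * (m / 4) + 2 ^ (m % 4) - 1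

/-- The split bilinear form `beta (a,c) = Σ a_i c_i`. -/
def beta {m : ℕ} (w : (Fin m → ZMod 2) × (Fin m → ZMod 2)) : ZMod 2 :=
  ∑ i : Fin m, w.1 i * w.2 i

def Good (m N : ℕ) : Prop :=
  ∃ S : Finset ((Fin m → ZMod 2) × (Fin m → ZMod 2)),
    S.card = N ∧ (∀ p ∈ S, beta p = 1) ∧
    ∀ p ∈ S, ∀ q ∈ S, p ≠ q → beta (p + q) = 1

lemma zmod2_add_self' : ∀ x : ZMod 2, x + x = 0 := by decide
lemma zmod2_add_self (x : ZMod 2) : x + x = 0 := zmod2_add_self' x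

lemma append_add {m n : ℕ} (u u' : Fin m → ZMod 2) (v v' : Fin n → ZMod 2) :
    Fin.append u v + Fin.append u' v' = Fin.append (u + u') (v + v') := by
  funext i
  induction i using Fin.addCases with
  | left i => simp [Fin.append_left]
  | right i => simp [Fin.append_right]

lemma beta_append {m n : ℕ} (a c : Fin m → ZMod 2) (a' c' : Fin n → ZMod 2) :
    beta (Fin.append a a', Fin.append c c') = beta (a, c) + beta (a', c') := by
  simp [beta, Fin.sum_univ_add, Fin.append_left, Fin.append_right]

lemma append_inj {m n : ℕ} {u u' : Fin m → ZMod 2} {v v' : Fin n → ZMod 2}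
    (h : Fin.append u v = Fin.append u' v') : u = u' ∧ v = v' := by
  constructor
  · funext i
    have := congrFun h (Fin.castAdd n i)
    simpa [Fin.append_left] using this
  · funext i
    have := congrFun h (Fin.natAdd m i)
    simpa [Fin.append_right] using this

set_option maxRecDepth 20000 in
lemma good_step {m N : ℕ} (h : Good m N) : Good (m + 4) (N + 8) := by
  obtain ⟨S, hcard, h1, h2⟩ := h
  set t : (Fin 4 → ZMod 2) × (Fin 4 → ZMod 2) := (![1,1,1,1], ![1,0,1,0]) with ht_def
  set T : Finset ((Fin 4 → ZMod 2) × (Fin 4 → ZMod 2)) :=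
    {(![0,0,0,1],![0,0,0,1]), (![0,0,1,0],![0,0,1,1]), (![0,0,1,1],![0,1,1,0]),
     (![0,1,0,0],![0,1,1,1]), (![0,1,0,1],![0,1,0,0]), (![0,1,1,0],![0,1,0,1]),
     (![0,1,1,1],![1,0,1,0]), (![1,1,1,1],![0,0,1,0])} with hT_def
  have hTcard : T.card = 8 := by decide
  have htT : t ∉ T := by decide
  have hbt : beta t = 0 := by decide
  have hbs : ∀ s ∈ T, beta s = 1 := by decide
  have hbts : ∀ s ∈ T, beta (t + s) = 0 := by decide
  have hbss : ∀ s ∈ T, ∀ s' ∈ T, s ≠ s' → beta (s + s') = 1 := by decide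
  set F : ((Fin m → ZMod 2) × (Fin m → ZMod 2)) →
      ((Fin (m+4) → ZMod 2) × (Fin (m+4) → ZMod 2)) :=
    fun w => (Fin.append w.1 t.1, Fin.append w.2 t.2) with hF_def
  set G : ((Fin 4 → ZMod 2) × (Fin 4 → ZMod 2)) →
      ((Fin (m+4) → ZMod 2) × (Fin (m+4) → ZMod 2)) :=
    fun s => (Fin.append (0 : Fin m → ZMod 2) s.1, Fin.append (0 : Fin m → ZMod 2) s.2) with hG_def
  have hFinj : Function.Injective F := by
    intro w w' hw
    have h1' := congrArg Prod.fst hw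
    have h2' := congrArg Prod.snd hw
    exact Prod.ext (append_inj h1').1 (append_inj h2').1
  have hGinj : Function.Injective G := by
    intro s s' hs
    have h1' := congrArg Prod.fst hs
    have h2' := congrArg Prod.snd hs
    exact Prod.ext (append_inj h1').2 (append_inj h2').2
  have hdisj : Disjoint (S.image F) (T.image G) := by
    rw [Finset.disjoint_left]
    rintro x hx hx'
    obtain ⟨w, hw, rfl⟩ := Finset.mem_image.1 hx
    obtain ⟨s, hs, hws⟩ := Finset.mem_image.1 hx'
    have h1' := congrArg Prod.fst hws
    have h2' := congrArg Prod.snd hws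
    have : s = t := Prod.ext (append_inj h1').2 (append_inj h2').2
    exact htT (this ▸ hs)
  refine ⟨S.image F ∪ T.image G, ?_, ?_, ?_⟩
  · rw [Finset.card_union_of_disjoint hdisj, Finset.card_image_of_injective _ hFinj,
      Finset.card_image_of_injective _ hGinj, hcard, hTcard]
  · intro p hp
    rcases Finset.mem_union.1 hp with hp | hp
    · obtain ⟨w, hw, rfl⟩ := Finset.mem_image.1 hp
      show beta (Fin.append w.1 t.1, Fin.append w.2 t.2) = 1
      have hb : beta (w.1, w.2) = 1 := h1 w hw
      rw [beta_append, hb, hbt, add_zero]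
    · obtain ⟨s, hs, rfl⟩ := Finset.mem_image.1 hp
      show beta (Fin.append (0 : Fin m → ZMod 2) s.1,
        Fin.append (0 : Fin m → ZMod 2) s.2) = 1
      rw [beta_append, hbs s hs]
      simp [beta]
  · intro p hp q hq hpq
    rcases Finset.mem_union.1 hp with hp | hp <;> rcases Finset.mem_union.1 hq with hq | hq
    · obtain ⟨w, hw, rfl⟩ := Finset.mem_image.1 hp
      obtain ⟨v, hv, rfl⟩ := Finset.mem_image.1 hq
      have hwv : w ≠ v := fun e => hpq (by rw [e])
      show beta (Fin.append w.1 t.1 + Fin.append v.1 t.1,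
        Fin.append w.2 t.2 + Fin.append v.2 t.2) = 1
      have hb : beta (w.1 + v.1, w.2 + v.2) = 1 := h2 w hw v hv hwv
      rw [append_add, append_add, beta_append, hb]
      have : beta (t.1 + t.1, t.2 + t.2) = 0 := by
        have e1 : t.1 + t.1 = 0 := funext fun i => zmod2_add_self _
        have e2 : t.2 + t.2 = 0 := funext fun i => zmod2_add_self _
        rw [e1, e2]; simp [beta]
      rw [this, add_zero]
    · obtain ⟨w, hw, rfl⟩ := Finset.mem_image.1 hp
      obtain ⟨s, hs, rfl⟩ := Finset.mem_image.1 hq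
      show beta (Fin.append w.1 t.1 + Fin.append (0 : Fin m → ZMod 2) s.1,
        Fin.append w.2 t.2 + Fin.append (0 : Fin m → ZMod 2) s.2) = 1
      have hb : beta (w.1, w.2) = 1 := h1 w hw
      have hb2 : beta (t.1 + s.1, t.2 + s.2) = 0 := hbts s hs
      rw [append_add, append_add, add_zero, add_zero, beta_append, hb, hb2, add_zero]
    · obtain ⟨s, hs, rfl⟩ := Finset.mem_image.1 hp
      obtain ⟨w, hw, rfl⟩ := Finset.mem_image.1 hq
      show beta (Fin.append (0 : Fin m → ZMod 2) s.1 + Fin.append w.1 t.1,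
        Fin.append (0 : Fin m → ZMod 2) s.2 + Fin.append w.2 t.2) = 1
      have hb : beta (w.1, w.2) = 1 := h1 w hw
      have hb2 : beta (t.1 + s.1, t.2 + s.2) = 0 := hbts s hs
      rw [append_add, append_add, zero_add, zero_add, beta_append, hb,
        add_comm s.1 t.1, add_comm s.2 t.2, hb2, add_zero]
    · obtain ⟨s, hs, rfl⟩ := Finset.mem_image.1 hp
      obtain ⟨s', hs', rfl⟩ := Finset.mem_image.1 hq
      have hss : s ≠ s' := fun e => hpq (by rw [e])
      show beta (Fin.append (0 : Fin m → ZMod 2) s.1 + Fin.append (0 : Fin m → ZMod 2) s'.1,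
        Fin.append (0 : Fin m → ZMod 2) s.2 + Fin.append (0 : Fin m → ZMod 2) s'.2) = 1
      have hb : beta (s.1 + s'.1, s.2 + s'.2) = 1 := hbss s hs s' hs' hss
      rw [append_add, append_add, beta_append, hb, zero_add]
      simp [beta]

lemma good0 : Good 0 (radonHurwitz 0) := ⟨∅, by decide, by decide, by decide⟩

lemma good1 : Good 1 (radonHurwitz 1) :=
  ⟨{(![1], ![1])}, by decide, by decide, by decide⟩

lemma good2 : Good 2 (radonHurwitz 2) :=
  ⟨{(![0,1],![0,1]), (![1,0],![1,1]), (![1,1],![1,0])},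
    by decide, by decide, by decide⟩

lemma good3 : Good 3 (radonHurwitz 3) :=
  ⟨{(![0,0,1],![0,0,1]), (![0,1,0],![0,1,1]), (![0,1,1],![1,1,0]),
    (![1,0,0],![1,1,1]), (![1,0,1],![1,0,0]), (![1,1,0],![1,0,1]),
    (![1,1,1],![0,1,0])},
    by decide, by decide, by decide⟩

lemma rh_step (n : ℕ) : radonHurwitz (n + 4) = radonHurwitz n + 8 := by
  have h1 : (n + 4) / 4 = n / 4 + 1 := by omega
  have h2 : (n + 4) % 4 = n % 4 := by omega
  have h3 : 1 ≤ 2 ^ (n % 4) := Nat.one_le_two_pow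
  simp only [radonHurwitz, h1, h2]
  omega

lemma good_all (m : ℕ) : Good m (radonHurwitz m) := by
  induction m using Nat.strong_induction_on with
  | _ m ih =>
    rcases Nat.lt_or_ge m 4 with h4 | h4
    · interval_cases m
      · exact good0
      · exact good1
      · exact good2
      · exact good3
    · obtain ⟨n, rfl⟩ : ∃ n, m = n + 4 := ⟨m - 4, by omega⟩
      rw [rh_step]
      exact good_step (ih n (by omega))

/-- The inverse of the prefix-sum map: `Dmap c i = c i - c (i-1)`. -/
def Dmap {m : ℕ} (c : Fin m → ZMod 2) : Fin m → ZMod 2 :=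
  fun i => c i + if h : 0 < (i : ℕ) then c ⟨(i : ℕ) - 1, Nat.lt_of_le_of_lt (Nat.sub_le _ _) i.isLt⟩ else 0

lemma Dmap_add {m : ℕ} (c c' : Fin m → ZMod 2) : Dmap (c + c') = Dmap c + Dmap c' := by
  funext i
  simp only [Dmap, Pi.add_apply]
  split_ifs <;> ring

lemma sum_Iic_Dmap {m : ℕ} (c : Fin m → ZMod 2) (i : Fin m) :
    ∑ j ∈ Finset.Iic i, Dmap c j = c i := by
  suffices h : ∀ n : ℕ, ∀ i : Fin m, (i : ℕ) ≤ n → ∑ j ∈ Finset.Iic i, Dmap c j = c i from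
    h (i : ℕ) i le_rfl
  intro n
  induction n with
  | zero =>
    intro i hi
    have h0 : (i : ℕ) = 0 := Nat.le_zero.1 hi
    have hIic : Finset.Iic i = {i} := by
      ext j
      simp only [Finset.mem_Iic, Finset.mem_singleton, Fin.le_def, h0, Nat.le_zero]
      constructor
      · intro hj; exact Fin.ext (by omega)
      · intro hj; rw [hj, h0]
    rw [hIic, Finset.sum_singleton]
    simp [Dmap, h0]
  | succ n ih =>
    intro i hi
    rcases Nat.eq_zero_or_pos i.val with h0 | hpos
    · have hIic : Finset.Iic i = {i} := by
        ext j
        simp only [Finset.mem_Iic, Finset.mem_singleton, Fin.le_def, h0, Nat.le_zero]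
        constructor
        · intro hj; exact Fin.ext (by omega)
        · intro hj; rw [hj, h0]
      rw [hIic, Finset.sum_singleton]
      simp [Dmap, h0]
    · have hi' : (i : ℕ) - 1 < m := Nat.lt_of_le_of_lt (Nat.sub_le _ _) i.isLt
      set i' : Fin m := ⟨(i : ℕ) - 1, hi'⟩ with hi'def
      have hIio : Finset.Iio i = Finset.Iic i' := by
        ext j
        simp only [Finset.mem_Iio, Finset.mem_Iic, Fin.lt_def, Fin.le_def]
        have e1 : ((⟨(i : ℕ) - 1, hi'⟩ : Fin m) : ℕ) = (i : ℕ) - 1 := rfl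
        have e2 : (i' : ℕ) = (i : ℕ) - 1 := rfl
        omega
      have hins : Finset.Iic i = insert i (Finset.Iio i) := by
        ext j
        simp only [Finset.mem_Iic, Finset.mem_insert, Finset.mem_Iio]
        constructor
        · intro hj; rcases eq_or_lt_of_le hj with h | h
          · exact Or.inl h
          · exact Or.inr h
        · rintro (rfl | h)
          · exact le_refl _
          · exact le_of_lt h
      rw [hins, Finset.sum_insert (by simp), hIio, ih i' (by simp only [hi'def]; omega)]
      have hDi : Dmap c i = c i + c i' := by
        simp only [Dmap, hpos, dif_pos]
        rfl
      rw [hDi, add_assoc, zmod2_add_self, add_zero]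

lemma alpha_Dmap {m : ℕ} (a c : Fin m → ZMod 2) : alpha a (Dmap c) = beta (a, c) := by
  unfold alpha beta
  simp only [sum_Iic_Dmap]

lemma Dmap_inj {m : ℕ} : Function.Injective (Dmap (m := m)) := by
  intro c c' h
  funext i
  calc c i = ∑ j ∈ Finset.Iic i, Dmap c j := (sum_Iic_Dmap c i).symm
    _ = ∑ j ∈ Finset.Iic i, Dmap c' j := by rw [h]
    _ = c' i := sum_Iic_Dmap c' i

theorem alpha_max_system (m : ℕ) :
    ∃ S : Finset ((Fin m → ZMod 2) × (Fin m → ZMod 2)),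
      S.card = radonHurwitz m ∧
      (∀ p ∈ S, alpha p.1 p.2 = 1) ∧
      (∀ p ∈ S, ∀ q ∈ S, p ≠ q → alpha (p.1 + q.1) (p.2 + q.2) = 1) := by
  classical
  obtain ⟨S, hcard, h1, h2⟩ := good_all m
  have hinj : Function.Injective
      (fun w : (Fin m → ZMod 2) × (Fin m → ZMod 2) => (w.1, Dmap w.2)) := by
    intro w w' hw
    have e1 := congrArg Prod.fst hw
    have e2 := congrArg Prod.snd hw
    exact Prod.ext e1 (Dmap_inj e2)
  refine ⟨S.image (fun w => (w.1, Dmap w.2)), ?_, ?_, ?_⟩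
  · rw [Finset.card_image_of_injective _ hinj, hcard]
  · intro p hp
    obtain ⟨w, hw, rfl⟩ := Finset.mem_image.1 hp
    show alpha w.1 (Dmap w.2) = 1
    rw [alpha_Dmap]
    exact h1 w hw
  · intro p hp q hq hpq
    obtain ⟨w, hw, rfl⟩ := Finset.mem_image.1 hp
    obtain ⟨v, hv, rfl⟩ := Finset.mem_image.1 hq
    have hwv : w ≠ v := fun e => hpq (by rw [e])
    show alpha (w.1 + v.1) (Dmap w.2 + Dmap v.2) = 1
    rw [← Dmap_add, alpha_Dmap]
    exact h2 w hw v hv hwv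
end

section
/- For every m : ℕ, setting n = 2^m, there exist p(m) real n×n matrices C_1, …, C_{p(m)} such that each C_k is orthogonal (C_kᵀ C_k = 1), each satisfies C_k² = −1, and any two distinct ones anticommute: C_k C_l = −C_l C_k for k ≠ l. Consequently, for every x on the unit sphere of ℝⁿ the vectors C_1 x, …, C_{p(m)} x form an orthonormal system each member of which is orthogonal to x. -/
open Matrix
open scoped RealInnerProductSpace

/-!
Index `ℝ^(2^m)` by `𝔽₂^m` and attach to a label `(a, b) ∈ 𝔽₂^m × 𝔽₂^m` the signed permutation
matrix `X^a Z^b`, where `X^a` translates by `a` and `Z^b` is diagonal with entries `(-1)^(b ⬝ y)`.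
These matrices are orthogonal and multiply by `X^a Z^b X^c Z^d = (-1)^(b ⬝ c) X^(a+c) Z^(b+d)`,
so `X^a Z^b` squares to `(-1)^(b ⬝ a)` and two of them anticommute iff `b ⬝ c + d ⬝ a = 1`.
The problem thus becomes finding `p(m)` labels with `twist v v = 1` and `twist v w + twist w v = 1`
for distinct `v, w`, where `twist (a, b) (c, d) = b ⬝ c`.

Eight such labels `e_i` on four bits handle `m = 4`; their sum `ω`, the label of the product of
the eight matrices, has `twist ω ω = 0` and `twist ω e_i + twist e_i ω = 1`. Hence labels
`w_1, …, w_p` for `m` give the `8 + p` labels `(e_i, 0), (ω, w_k)` for `m + 4`, which is the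
periodicity of `p`; the cases `m < 4` are listed by hand.

Finally an orthogonal `C` with `C² = -1` is skew, so `⟪C x, x⟫ = 0`; for anticommuting `C_k, C_l`
the matrix `C_kᵀ C_l` is skew as well, which makes `C_k x` and `C_l x` orthogonal.
-/

theorem radonHurwitz_four_add (m : ℕ) : radonHurwitz (4 + m) = 8 + radonHurwitz m := by
  have : 1 ≤ 2 ^ (m % 4) := Nat.one_le_two_pow
  unfold radonHurwitz
  rw [Nat.add_mod_left]
  omega

section Euclidean

variable {n : Type*} [Fintype n] [DecidableEq n]

theorem Matrix.inner_toEuclideanLin_toEuclideanLin (A B : Matrix n n ℝ)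
    (x y : EuclideanSpace ℝ n) :
    ⟪toEuclideanLin A x, toEuclideanLin B y⟫ = ⟪x, toEuclideanLin (Aᵀ * B) y⟫ := by
  rw [← conjTranspose_eq_transpose_of_trivial, toLpLin_mul_same, LinearMap.comp_apply,
    toEuclideanLin_conjTranspose_eq_adjoint, LinearMap.adjoint_inner_right]

theorem Matrix.inner_toEuclideanLin_self_of_transpose_eq_neg {M : Matrix n n ℝ} (hM : Mᵀ = -M)
    (x : EuclideanSpace ℝ n) : ⟪toEuclideanLin M x, x⟫ = 0 := by
  have h := inner_toEuclideanLin_toEuclideanLin M 1 x x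
  rw [hM, Matrix.neg_mul, mul_one, toLpLin_one, LinearMap.id_apply, map_neg,
    LinearMap.neg_apply, inner_neg_right, real_inner_comm] at h
  rw [real_inner_comm]
  linarith

theorem Matrix.norm_toEuclideanLin_of_transpose_mul_self {A : Matrix n n ℝ} (hA : Aᵀ * A = 1)
    (x : EuclideanSpace ℝ n) : ‖toEuclideanLin A x‖ = ‖x‖ := by
  rw [norm_eq_sqrt_real_inner, inner_toEuclideanLin_toEuclideanLin, hA, toLpLin_one,
    LinearMap.id_apply, ← norm_eq_sqrt_real_inner]

end Euclidean

theorem Matrix.append_dotProduct_append {α : Type*} [AddCommMonoid α] [Mul α] {m n : ℕ}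
    (s b : Fin m → α) (t u : Fin n → α) :
    Fin.append s t ⬝ᵥ Fin.append b u = s ⬝ᵥ b + t ⬝ᵥ u := by
  simp [dotProduct, Fin.sum_univ_add]

namespace RadonHurwitz

abbrev Label (σ : Type*) := (σ → ZMod 2) × (σ → ZMod 2)

section Labels

variable {σ : Type*} [Fintype σ]

def twist (v w : Label σ) : ZMod 2 := v.2 ⬝ᵥ w.1

@[simp] theorem twist_zero_left (v : Label σ) : twist 0 v = 0 :=
  zero_dotProduct _

@[simp] theorem twist_zero_right (v : Label σ) : twist v 0 = 0 :=
  dotProduct_zero _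

structure IsHurwitzRadonLabeling {ι : Type*} (v : ι → Label σ) : Prop where
  twist_self : ∀ k, twist (v k) (v k) = 1
  twist_add_twist : Pairwise fun k l => twist (v k) (v l) + twist (v l) (v k) = 1

end Labels

def Label.append {m n : ℕ} (v : Label (Fin m)) (w : Label (Fin n)) : Label (Fin (m + n)) :=
  (Fin.append v.1 w.1, Fin.append v.2 w.2)

theorem twist_append {m n : ℕ} (v v' : Label (Fin m)) (w w' : Label (Fin n)) :
    twist (v.append w) (v'.append w') = twist v v' + twist w w' :=
  append_dotProduct_append _ _ _ _

def periodicityLabels : Fin 8 → Label (Fin 4) :=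
  ![(![1, 0, 0, 0], ![1, 0, 0, 0]),
    (![0, 1, 0, 0], ![1, 1, 0, 0]),
    (![1, 1, 0, 0], ![0, 1, 1, 0]),
    (![0, 0, 1, 0], ![1, 1, 1, 0]),
    (![1, 0, 1, 0], ![0, 0, 1, 0]),
    (![0, 1, 1, 0], ![1, 0, 1, 0]),
    (![1, 1, 1, 0], ![0, 1, 0, 1]),
    (![1, 1, 1, 1], ![0, 1, 0, 0])]

theorem isHurwitzRadonLabeling_periodicityLabels : IsHurwitzRadonLabeling periodicityLabels :=
  ⟨by decide, by unfold Pairwise; decide⟩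

theorem twist_sum_periodicityLabels_self :
    twist (∑ i, periodicityLabels i) (∑ i, periodicityLabels i) = 0 := by
  decide

theorem twist_sum_periodicityLabels_add (i : Fin 8) :
    twist (∑ j, periodicityLabels j) (periodicityLabels i) +
      twist (periodicityLabels i) (∑ j, periodicityLabels j) = 1 := by
  revert i
  decide

def extendLabels {m p : ℕ} (w : Fin p → Label (Fin m)) : Fin (8 + p) → Label (Fin (4 + m)) :=
  Fin.append (fun i => (periodicityLabels i).append 0)
    fun k => (∑ i, periodicityLabels i).append (w k)

theorem IsHurwitzRadonLabeling.extend {m p : ℕ} {w : Fin p → Label (Fin m)}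
    (hw : IsHurwitzRadonLabeling w) : IsHurwitzRadonLabeling (extendLabels w) := by
  have he := isHurwitzRadonLabeling_periodicityLabels
  constructor
  · intro k
    induction k using Fin.addCases with
    | left i => simpa [extendLabels, twist_append] using he.twist_self i
    | right k =>
      simpa [extendLabels, twist_append, twist_sum_periodicityLabels_self]
        using hw.twist_self k
  · intro k l hkl
    induction k using Fin.addCases with
    | left i =>
      induction l using Fin.addCases with
      | left j =>
        simpa [extendLabels, twist_append]
          using he.twist_add_twist (ne_of_apply_ne (Fin.castAdd p) hkl)
      | right l =>
        simpa [extendLabels, twist_append, add_comm]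
          using twist_sum_periodicityLabels_add i
    | right k =>
      induction l using Fin.addCases with
      | left j =>
        simpa [extendLabels, twist_append] using twist_sum_periodicityLabels_add j
      | right l =>
        simpa [extendLabels, twist_append, twist_sum_periodicityLabels_self]
          using hw.twist_add_twist (ne_of_apply_ne (Fin.natAdd 8) hkl)

theorem exists_isHurwitzRadonLabeling_of_lt_four {m : ℕ} (hm : m < 4) :
    ∃ v : Fin (radonHurwitz m) → Label (Fin m), IsHurwitzRadonLabeling v := by
  interval_cases m
  · exact ⟨![], ⟨by decide, by unfold Pairwise; decide⟩⟩
  · exact ⟨![(![1], ![1])], ⟨by decide, by unfold Pairwise; decide⟩⟩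
  · exact ⟨![(![1, 0], ![1, 0]), (![0, 1], ![1, 1]), (![1, 1], ![0, 1])],
      ⟨by decide, by unfold Pairwise; decide⟩⟩
  · exact ⟨![(![1, 0, 0], ![1, 0, 0]), (![0, 1, 0], ![1, 1, 0]), (![1, 1, 0], ![0, 1, 1]),
      (![0, 0, 1], ![1, 1, 1]), (![1, 0, 1], ![0, 0, 1]), (![0, 1, 1], ![1, 0, 1]),
      (![1, 1, 1], ![0, 1, 0])], ⟨by decide, by unfold Pairwise; decide⟩⟩

theorem exists_isHurwitzRadonLabeling (m : ℕ) :
    ∃ v : Fin (radonHurwitz m) → Label (Fin m), IsHurwitzRadonLabeling v := by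
  induction m using Nat.strong_induction_on with
  | _ m ih =>
    rcases lt_or_ge m 4 with hm | hm
    · exact exists_isHurwitzRadonLabeling_of_lt_four hm
    · obtain ⟨m, rfl⟩ := Nat.exists_eq_add_of_le hm
      obtain ⟨w, hw⟩ := ih m (by omega)
      rw [radonHurwitz_four_add]
      exact ⟨extendLabels w, hw.extend⟩

section Matrices

variable {σ : Type*} [Fintype σ] (R : Type*) [Ring R]

/-- `X^a Z^b` for `v = (a, b)`. -/
def pauli (v : Label σ) : Matrix (σ → ZMod 2) (σ → ZMod 2) R :=
  of fun x y => if x = y + v.1 then (-1 : ℤˣ) ^ (v.2 ⬝ᵥ y) • (1 : R) else 0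

variable {R}

theorem pauli_zero : pauli R (0 : Label σ) = 1 := by
  ext x y
  simp [pauli, one_apply]

theorem pauli_transpose (v : Label σ) : (pauli R v)ᵀ = (-1 : ℤˣ) ^ twist v v • pauli R v := by
  ext x y
  have hxy : y = x + v.1 ↔ x = y + v.1 := by
    constructor <;> rintro rfl <;> rw [add_assoc, ZModModule.add_self, add_zero]
  simp only [pauli, transpose_apply, of_apply, Matrix.smul_apply, hxy]
  split_ifs with h
  · rw [h, dotProduct_add, uzpow_add, smul_smul, mul_comm, twist]
  · rw [smul_zero]

variable [DecidableEq σ]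

theorem pauli_mul (v w : Label σ) :
    pauli R v * pauli R w = (-1 : ℤˣ) ^ twist v w • pauli R (v + w) := by
  ext x y
  rw [mul_apply, Finset.sum_eq_single (y + w.1) (fun z _ hz => by simp [pauli, hz]) (by simp)]
  simp only [pauli, of_apply, Matrix.smul_apply, Prod.fst_add, Prod.snd_add, ← add_assoc,
    add_right_comm y w.1 v.1, if_true]
  split_ifs
  · rw [dotProduct_add, add_dotProduct, uzpow_add, uzpow_add, smul_mul_smul_comm, mul_one,
      smul_smul, mul_assoc, mul_left_comm, twist]
  · simp

theorem pauli_mul_self (v : Label σ) : pauli R v * pauli R v = (-1 : ℤˣ) ^ twist v v • 1 := by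
  rw [pauli_mul, ZModModule.add_self, pauli_zero]

theorem pauli_transpose_mul_self (v : Label σ) : (pauli R v)ᵀ * pauli R v = 1 := by
  rw [pauli_transpose, smul_mul_assoc, pauli_mul_self, smul_smul, Int.units_mul_self, one_smul]

theorem pauli_mul_self_of_twist_eq_one {v : Label σ} (h : twist v v = 1) :
    pauli R v * pauli R v = -1 := by
  rw [pauli_mul_self, h, uzpow_one, Units.neg_smul, one_smul]

theorem pauli_anticomm_of_twist_add_twist_eq_one {v w : Label σ}
    (h : twist v w + twist w v = 1) : pauli R v * pauli R w = -(pauli R w * pauli R v) := by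
  rw [pauli_mul, pauli_mul, add_comm w, eq_sub_of_add_eq h, uzpow_sub, uzpow_one, div_eq_mul_inv,
    Int.units_inv_eq_self, neg_one_mul, Units.neg_smul]

end Matrices

structure IsHurwitzRadonFamily {ι n R : Type*} [Fintype n] [DecidableEq n] [Ring R]
    (C : ι → Matrix n n R) : Prop where
  transpose_mul_self : ∀ k, (C k)ᵀ * C k = 1
  mul_self : ∀ k, C k * C k = -1
  anticomm : Pairwise fun k l => C k * C l = -(C l * C k)

theorem IsHurwitzRadonLabeling.isHurwitzRadonFamily_pauli {ι σ : Type*} [Fintype σ]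
    [DecidableEq σ] (R : Type*) [Ring R] {v : ι → Label σ} (hv : IsHurwitzRadonLabeling v) :
    IsHurwitzRadonFamily fun k => pauli R (v k) where
  transpose_mul_self k := pauli_transpose_mul_self (v k)
  mul_self k := pauli_mul_self_of_twist_eq_one (hv.twist_self k)
  anticomm _ _ hkl := pauli_anticomm_of_twist_add_twist_eq_one (hv.twist_add_twist hkl)

namespace IsHurwitzRadonFamily

variable {ι n : Type*} [Fintype n] [DecidableEq n]

theorem reindex {n' R : Type*} [Fintype n'] [DecidableEq n'] [Ring R] {C : ι → Matrix n n R}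
    (hC : IsHurwitzRadonFamily C) (e : n ≃ n') :
    IsHurwitzRadonFamily fun k => Matrix.reindex e e (C k) where
  transpose_mul_self k := by
    rw [transpose_reindex, ← coe_reindexRingEquiv, ← map_mul, hC.transpose_mul_self, map_one]
  mul_self k := by rw [← coe_reindexRingEquiv, ← map_mul, hC.mul_self, map_neg, map_one]
  anticomm k l hkl := by
    dsimp only
    rw [← coe_reindexRingEquiv, ← map_mul, ← map_mul, hC.anticomm hkl, map_neg]

theorem transpose_eq_neg {R : Type*} [Ring R] {C : ι → Matrix n n R}
    (hC : IsHurwitzRadonFamily C) (k : ι) : (C k)ᵀ = -C k := by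
  calc (C k)ᵀ = -((C k)ᵀ * (C k * C k)) := by rw [hC.mul_self, Matrix.mul_neg, mul_one, neg_neg]
    _ = -C k := by rw [← mul_assoc, hC.transpose_mul_self, one_mul]

variable {C : ι → Matrix n n ℝ}

theorem inner_toEuclideanLin_self (hC : IsHurwitzRadonFamily C) (k : ι)
    (x : EuclideanSpace ℝ n) :
    ⟪toEuclideanLin (C k) x, x⟫ = 0 :=
  inner_toEuclideanLin_self_of_transpose_eq_neg (hC.transpose_eq_neg k) x

theorem orthonormal (hC : IsHurwitzRadonFamily C) {x : EuclideanSpace ℝ n} (hx : ‖x‖ = 1) :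
    Orthonormal ℝ fun k => toEuclideanLin (C k) x := by
  refine ⟨fun k => ?_, fun k l hkl => ?_⟩
  · rw [norm_toEuclideanLin_of_transpose_mul_self (hC.transpose_mul_self k), hx]
  have hskew : ((C k)ᵀ * C l)ᵀ = -((C k)ᵀ * C l) := by
    rw [transpose_mul, transpose_transpose, hC.transpose_eq_neg, hC.transpose_eq_neg,
      Matrix.neg_mul, Matrix.neg_mul, neg_neg, hC.anticomm hkl]
  show ⟪toEuclideanLin (C k) x, toEuclideanLin (C l) x⟫ = 0
  rw [inner_toEuclideanLin_toEuclideanLin, real_inner_comm]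
  exact inner_toEuclideanLin_self_of_transpose_eq_neg hskew x

end IsHurwitzRadonFamily

end RadonHurwitz

theorem exists_radonHurwitz_system (m : ℕ) :
    ∃ C : Fin (radonHurwitz m) → Matrix (Fin (2 ^ m)) (Fin (2 ^ m)) ℝ,
      (∀ k, (C k)ᵀ * C k = 1) ∧
      (∀ k, C k * C k = -1) ∧
      (∀ k l, k ≠ l → C k * C l = -(C l * C k)) ∧
      (∀ x : EuclideanSpace ℝ (Fin (2 ^ m)), ‖x‖ = 1 →
        (∀ k, ⟪Matrix.toEuclideanLin (C k) x, x⟫ = 0) ∧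
        (∀ k, ‖Matrix.toEuclideanLin (C k) x‖ = 1) ∧
        (∀ k l, k ≠ l →
          ⟪Matrix.toEuclideanLin (C k) x, Matrix.toEuclideanLin (C l) x⟫ = 0)) := by
  obtain ⟨v, hv⟩ := RadonHurwitz.exists_isHurwitzRadonLabeling m
  have hC := (hv.isHurwitzRadonFamily_pauli ℝ).reindex
    (Fintype.equivFinOfCardEq (α := Fin m → ZMod 2) (n := 2 ^ m) (by simp))
  exact ⟨_, hC.transpose_mul_self, hC.mul_self, hC.anticomm, fun x hx =>
    ⟨(hC.inner_toEuclideanLin_self · x), (hC.orthonormal hx).1, (hC.orthonormal hx).2⟩⟩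
end
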